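/- arXiv:1708.09517 — 2 statements merged into one kernel-verified Lean document; each statement's English description precedes it below -/
import Mathlib

section
/- Let n be a positive integer and p > 0. If f is a probability density on ℝ^n such that the differential entropy h(f) = -∫_{ℝ^n} f(x) log₂ f(x) dx exists and is finite, and M_p := ((1/n) ∫_{ℝ^n} ‖x‖^p f(x) dx)^{1/p} < ∞, then h(f) ≤ n · log₂( k_{n,p} · n^{1/p} · M_p ). -/
open MeasureTheory Real

/-- The constant `k_{n,p}` from the maximum entropy inequality. -/
noncomputable def kconst (n : ℕ) (p : ℝ) : ℝ :=
  Real.sqrt π * Real.exp (1 / p) * (p / n) ^ (1 / p) *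
    Real.Gamma ((n : ℝ) / p + 1) ^ ((n : ℝ)⁻¹) / Real.Gamma ((n : ℝ) / 2 + 1) ^ ((n : ℝ)⁻¹)

lemma exp_int (n : ℕ) (hn : 0 < n) (p b : ℝ) (hp : 0 < p) (hb : 0 < b) :
    Integrable (fun x : EuclideanSpace ℝ (Fin n) => Real.exp (-(b * ‖x‖ ^ p))) ∧
    ∫ x : EuclideanSpace ℝ (Fin n), Real.exp (-(b * ‖x‖ ^ p)) =
      ((b ^ (1/p))⁻¹) ^ n * (Real.sqrt π ^ n / Real.Gamma ((n:ℝ)/2+1)) * Real.Gamma ((n:ℝ)/p+1) := by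
  haveI : Nonempty (Fin n) := ⟨⟨0, hn⟩⟩
  set s : ℝ := b ^ (1/p) with hs
  have hs0 : 0 < s := Real.rpow_pos_of_pos hb _
  set g : EuclideanSpace ℝ (Fin n) → ℝ := fun x => s * ‖x‖ with hg
  have h1 : g 0 = 0 := by simp [hg]
  have h2 : ∀ x, g (-x) = g x := by intro x; simp [hg]
  have h3 : ∀ x y, g (x + y) ≤ g x + g y := by
    intro x y
    simpa [hg, mul_add] using mul_le_mul_of_nonneg_left (norm_add_le x y) hs0.le
  have h4 : ∀ {x}, g x = 0 → x = 0 := by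
    intro x hx
    rcases mul_eq_zero.1 hx with h | h
    · exact absurd h hs0.ne'
    · exact norm_eq_zero.1 h
  have h5 : ∀ (r : ℝ) x, g (r • x) ≤ |r| * g x := by
    intro r x
    rw [hg]
    simp only [norm_smul]
    rw [Real.norm_eq_abs]; ring_nf; exact le_refl _
  have key := MeasureTheory.measure_lt_one_eq_integral_div_gamma (volume) h1 h2 h3 h4 h5 hp
  have hgp : ∀ x : EuclideanSpace ℝ (Fin n), (g x) ^ p = b * ‖x‖ ^ p := by
    intro x
    rw [hg]
    rw [Real.mul_rpow hs0.le (norm_nonneg _), hs, ← Real.rpow_mul hb.le, one_div,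
      inv_mul_cancel₀ hp.ne', Real.rpow_one]
  have hset : {x : EuclideanSpace ℝ (Fin n) | g x < 1} = Metric.ball 0 s⁻¹ := by
    ext x
    simp only [Set.mem_setOf_eq, Metric.mem_ball, dist_zero_right, hg]
    rw [show (1:ℝ) = s * s⁻¹ by rw [mul_inv_cancel₀ hs0.ne']]
    exact mul_lt_mul_iff_right₀ hs0
  simp only [hgp, finrank_euclideanSpace_fin] at key
  rw [hset, EuclideanSpace.volume_ball, Fintype.card_fin] at key
  -- key : ofReal(s⁻¹)^n * ofReal(√π^n / Γ(n/2+1)) = ofReal(Z / Γ(n/p+1))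
  set Z : ℝ := ∫ x : EuclideanSpace ℝ (Fin n), Real.exp (-(b * ‖x‖ ^ p)) with hZ
  have hZ0 : 0 ≤ Z := integral_nonneg fun x => (Real.exp_pos _).le
  have hΓp : 0 < Real.Gamma ((n:ℝ)/p+1) := Real.Gamma_pos_of_pos (by positivity)
  have hΓ2 : 0 < Real.Gamma ((n:ℝ)/2+1) := Real.Gamma_pos_of_pos (by positivity)
  have hval : Z = (s⁻¹) ^ n * (Real.sqrt π ^ n / Real.Gamma ((n:ℝ)/2+1)) * Real.Gamma ((n:ℝ)/p+1) := by
    have h1' : ENNReal.ofReal ((s⁻¹)^n * (Real.sqrt π ^ n / Real.Gamma ((n:ℝ)/2+1))) =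
        ENNReal.ofReal (Z / Real.Gamma ((n:ℝ)/p+1)) := by
      rw [ENNReal.ofReal_mul (by positivity), ENNReal.ofReal_pow (by positivity)]
      exact key
    have h2' := ENNReal.ofReal_eq_ofReal_iff (by positivity) (by positivity) |>.1 h1'
    field_simp at h2' ⊢
    linarith [h2']
  constructor
  · by_contra hni
    rw [integral_undef hni] at hZ
    have : (0:ℝ) < Z := by rw [hval]; positivity
    rw [← hZ] at this; exact lt_irrefl _ this
  · exact hval

/-- **Maximum entropy under a `p`-th moment constraint.**
If `f` is a probability density on `ℝ^n` whose differential entropy (base 2) exists and is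
finite and whose normalized `p`-th moment `M_p = ((1/n)∫‖x‖^p f)^ (1/p)` is finite, then
`h(f) ≤ n log₂(k_{n,p} n^{1/p} M_p)`. -/
theorem stmt0 (n : ℕ) (hn : 0 < n) (p : ℝ) (hp : 0 < p)
    (f : EuclideanSpace ℝ (Fin n) → ℝ)
    (hf0 : ∀ x, 0 ≤ f x) (hfmeas : Measurable f)
    (hf1 : ∫ x, f x = 1)
    (hent : Integrable (fun x => f x * Real.logb 2 (f x)))
    (hmom : Integrable (fun x => ‖x‖ ^ p * f x)) :
    (-∫ x, f x * Real.logb 2 (f x)) ≤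
      (n : ℝ) * Real.logb 2 (kconst n p * (n : ℝ) ^ (1 / p) *
        ((1 / (n : ℝ)) * ∫ x, ‖x‖ ^ p * f x) ^ (1 / p)) := by
  haveI : Nonempty (Fin n) := ⟨⟨0, hn⟩⟩
  have hn' : (0:ℝ) < n := Nat.cast_pos.2 hn
  -- f is integrable
  have hfint : Integrable f := by
    by_contra h
    rw [integral_undef h] at hf1
    norm_num at hf1
  -- the moment is positive
  set M : ℝ := ∫ x : EuclideanSpace ℝ (Fin n), ‖x‖ ^ p * f x with hMdef
  have hM0 : 0 ≤ M := integral_nonneg fun x => mul_nonneg (by positivity) (hf0 x)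
  have hM : 0 < M := by
    rcases hM0.lt_or_eq with h | h
    · exact h
    · exfalso
      have hae : (fun x : EuclideanSpace ℝ (Fin n) => ‖x‖ ^ p * f x) =ᵐ[volume] 0 := by
        rw [← integral_eq_zero_iff_of_nonneg (fun x => mul_nonneg (by positivity) (hf0 x)) hmom]
        exact h.symm
      have hfae : f =ᵐ[volume] 0 := by
        have h0 : (volume : Measure (EuclideanSpace ℝ (Fin n))) {0} = 0 := measure_singleton 0
        filter_upwards [hae, measure_eq_zero_iff_ae_notMem.1 h0] with x hx hx0
        have hxne : x ≠ 0 := hx0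
        have : ‖x‖ ^ p ≠ 0 := by
          have : (0:ℝ) < ‖x‖ := norm_pos_iff.2 hxne
          positivity
        have := mul_eq_zero.1 hx
        tauto
      rw [integral_congr_ae hfae] at hf1
      simp at hf1
  -- the comparison density
  set b : ℝ := n / (p * M) with hbdef
  have hb : 0 < b := by positivity
  obtain ⟨hZint, hZval⟩ := exp_int n hn p b hp hb
  set Z : ℝ := ∫ x : EuclideanSpace ℝ (Fin n), Real.exp (-(b * ‖x‖ ^ p)) with hZdef
  have hΓp : 0 < Real.Gamma ((n:ℝ)/p+1) := Real.Gamma_pos_of_pos (by positivity)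
  have hΓ2 : 0 < Real.Gamma ((n:ℝ)/2+1) := Real.Gamma_pos_of_pos (by positivity)
  have hs0 : (0:ℝ) < b ^ (1/p) := Real.rpow_pos_of_pos hb _
  have hπ : (0:ℝ) < Real.sqrt π := Real.sqrt_pos.2 Real.pi_pos
  have hZ0 : 0 < Z := by rw [hZval]; positivity
  set c : ℝ := Z⁻¹ with hcdef
  have hc0 : 0 < c := by positivity
  set G : EuclideanSpace ℝ (Fin n) → ℝ := fun x => c * Real.exp (-(b * ‖x‖ ^ p)) with hGdef
  have hGint : Integrable G := hZint.const_mul c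
  have hG1 : ∫ x, G x = 1 := by
    rw [hGdef]
    rw [integral_const_mul, ← hZdef, hcdef, inv_mul_cancel₀ hZ0.ne']
  -- integrability of f * log f
  have hent' : Integrable (fun x => f x * Real.log (f x)) := by
    have heq : (fun x => f x * Real.log (f x))
        = fun x => Real.log 2 * (f x * Real.logb 2 (f x)) := by
      funext x
      rw [Real.logb]
      field_simp
    rw [heq]
    exact hent.const_mul _
  -- f * log G
  have hflogG : (fun x => f x * Real.log (G x))
      = fun x => Real.log c * f x - b * (‖x‖ ^ p * f x) := by
    funext x
    rw [hGdef]
    rw [Real.log_mul hc0.ne' (Real.exp_ne_zero _), Real.log_exp]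
    ring
  have hflogGint : Integrable (fun x => f x * Real.log (G x)) := by
    rw [hflogG]
    exact (hfint.const_mul _).sub (hmom.const_mul b)
  -- Gibbs pointwise
  have hpt : ∀ x, f x * Real.log (G x) - f x * Real.log (f x) ≤ G x - f x := by
    intro x
    have hGx : 0 < G x := by rw [hGdef]; positivity
    by_cases hfx : f x = 0
    · simp only [hfx, zero_mul, sub_zero, zero_sub, sub_self]
      linarith
    · have hfx' : 0 < f x := (hf0 x).lt_of_ne (Ne.symm hfx)
      have h := Real.log_le_sub_one_of_pos (div_pos hGx hfx')
      rw [Real.log_div hGx.ne' hfx'.ne'] at h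
      calc f x * Real.log (G x) - f x * Real.log (f x)
          = f x * (Real.log (G x) - Real.log (f x)) := by ring
        _ ≤ f x * (G x / f x - 1) := mul_le_mul_of_nonneg_left h hfx'.le
        _ = G x - f x := by field_simp
  -- integrate
  have hmono := integral_mono (hflogGint.sub hent') (hGint.sub hfint) hpt
  simp only [Pi.sub_apply] at hmono
  rw [integral_sub hflogGint hent', integral_sub hGint hfint, hG1, hf1, sub_self] at hmono
  have hIflogG : ∫ x, f x * Real.log (G x) = Real.log c - b * M := by
    rw [hflogG, integral_sub (hfint.const_mul _) (hmom.const_mul b), integral_const_mul,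
      integral_const_mul, hf1, mul_one, ← hMdef]
  rw [hIflogG] at hmono
  -- hmono : log c - b * M - ∫ f log f ≤ 0
  have hbM : b * M = n / p := by
    rw [hbdef]; field_simp
  have hmain : -∫ x, f x * Real.log (f x) ≤ (n:ℝ)/p + Real.log Z := by
    rw [hcdef, Real.log_inv] at hmono
    linarith [hmono, hbM ▸ hmono]
  -- rewrite goal in terms of natural log
  have hI : ∫ x, f x * Real.logb 2 (f x) = (∫ x, f x * Real.log (f x)) / Real.log 2 := by
    rw [← integral_div]
    congr 1
    funext x
    rw [Real.logb, mul_div_assoc]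
  have hlog2 : 0 < Real.log 2 := Real.log_pos one_lt_two
  rw [hI, Real.logb, ← neg_div, mul_div_assoc']
  rw [div_le_div_iff_of_pos_right hlog2]
  refine hmain.trans (le_of_eq ?_)
  -- final log computation
  have hK : (0:ℝ) < kconst n p * (n : ℝ) ^ (1 / p) * ((1 / (n : ℝ)) * M) ^ (1/p) := by
    rw [kconst]
    have h1 : (0:ℝ) < (p / n) ^ (1/p) := Real.rpow_pos_of_pos (by positivity) _
    have h2 : (0:ℝ) < Real.Gamma ((n:ℝ)/p+1) ^ ((n:ℝ)⁻¹) := Real.rpow_pos_of_pos hΓp _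
    have h3 : (0:ℝ) < Real.Gamma ((n:ℝ)/2+1) ^ ((n:ℝ)⁻¹) := Real.rpow_pos_of_pos hΓ2 _
    have h4 : (0:ℝ) < ((1:ℝ) / n * M) ^ (1/p) := Real.rpow_pos_of_pos (by positivity) _
    have h5 : (0:ℝ) < (n:ℝ) ^ ((1:ℝ)/p) := Real.rpow_pos_of_pos hn' _
    positivity
  have hlogZ : Real.log Z = (n:ℝ) * (-(1/p * Real.log b)) +
      ((n:ℝ) * (Real.log π / 2) - Real.log (Real.Gamma ((n:ℝ)/2+1))) +
      Real.log (Real.Gamma ((n:ℝ)/p+1)) := by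
    rw [hZval, Real.log_mul (by positivity) hΓp.ne', Real.log_mul (by positivity) (by positivity),
      Real.log_pow, Real.log_div (by positivity) hΓ2.ne', Real.log_pow, Real.log_inv,
      Real.log_rpow hb, Real.log_sqrt Real.pi_pos.le]
    all_goals (push_cast; ring)
  have hlogK : Real.log (kconst n p * (n : ℝ) ^ (1 / p) * ((1 / (n : ℝ)) * M) ^ (1/p)) =
      (Real.log π / 2 + 1/p + 1/p * (Real.log p - Real.log n)
        + (n:ℝ)⁻¹ * Real.log (Real.Gamma ((n:ℝ)/p+1))
        - (n:ℝ)⁻¹ * Real.log (Real.Gamma ((n:ℝ)/2+1)))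
      + 1/p * Real.log n + 1/p * (Real.log M - Real.log n) := by
    have h2 : (0:ℝ) < Real.Gamma ((n:ℝ)/p+1) ^ ((n:ℝ)⁻¹) := Real.rpow_pos_of_pos hΓp _
    have h3 : (0:ℝ) < Real.Gamma ((n:ℝ)/2+1) ^ ((n:ℝ)⁻¹) := Real.rpow_pos_of_pos hΓ2 _
    rw [kconst]
    rw [Real.log_mul (by positivity) (Real.rpow_pos_of_pos (by positivity) _).ne',
      Real.log_mul (by positivity) (Real.rpow_pos_of_pos hn' _).ne',
      Real.log_div (by positivity) h3.ne',
      Real.log_mul (by positivity) h2.ne',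
      Real.log_mul (by positivity) (Real.rpow_pos_of_pos (by positivity) _).ne',
      Real.log_mul (by positivity) (Real.exp_ne_zero _),
      Real.log_rpow (by positivity), Real.log_rpow hΓp, Real.log_rpow hΓ2,
      Real.log_rpow hn', Real.log_rpow (by positivity : (0:ℝ) < 1 / n * M),
      Real.log_exp, Real.log_sqrt Real.pi_pos.le,
      Real.log_div hp.ne' hn'.ne',
      Real.log_mul (by positivity : (1:ℝ)/n ≠ 0) hM.ne', one_div (n:ℝ), Real.log_inv]
    ring
  rw [hlogK, hlogZ, hbdef]
  rw [Real.log_div (by positivity : (n:ℝ) ≠ 0) (by positivity : p * M ≠ 0),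
    Real.log_mul hp.ne' hM.ne']
  field_simp
  ring
end

section
/- Let n_t, n_r be positive integers, H ∈ ℝ^{n_r × n_t}, and μ any probability measure on ℝ^{n_t}. Define f_μ(y) = (2π)^{-n_r/2} ∫ exp(-‖y - Hx‖²/2) dμ(x) for y ∈ ℝ^{n_r}. Then ∫_{ℝ^{n_r}} f_μ(y)² dy = 2^{-n_r} π^{-n_r/2} · ∫∫ exp( -‖H(x - x')‖²/4 ) dμ(x) dμ(x'). -/
open MeasureTheory Real

/-! By the parallelogram law, the product of the Gaussians `exp (-‖y - a‖² / 2)` and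
`exp (-‖y - b‖² / 2)` equals `exp (-‖a - b‖² / 4)` times the Gaussian `exp (-‖y - m‖²)` centred
at the midpoint `m` of `a` and `b`, whose integral is `π ^ (d / 2)`. Writing the square of
`∫ exp (-‖y - H x‖² / 2) dμ(x)` as an integral over `μ ⊗ μ` and integrating in `y` first
(Fubini) gives the formula. -/

section

variable {V : Type*} [NormedAddCommGroup V] [InnerProductSpace ℝ V]

lemma exp_neg_sq_norm_sub_mul_exp_neg_sq_norm_sub (a b y : V) :
    rexp (-‖y - a‖ ^ 2 / 2) * rexp (-‖y - b‖ ^ 2 / 2) =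
      rexp (-‖a - b‖ ^ 2 / 4) * rexp (-‖y - midpoint ℝ a b‖ ^ 2) := by
  rw [← Real.exp_add, ← Real.exp_add]
  congr 1
  have hp := parallelogram_law_with_norm ℝ (y - a) (y - b)
  have hsum : (y - a) + (y - b) = (2 : ℝ) • (y - midpoint ℝ a b) := by
    rw [midpoint_eq_smul_add, smul_sub, smul_smul]
    norm_num
    module
  rw [hsum, norm_smul, show (y - a) - (y - b) = -(a - b) by abel, norm_neg,
    Real.norm_ofNat] at hp
  linarith

variable [FiniteDimensional ℝ V] [MeasurableSpace V] [BorelSpace V]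

lemma integrable_exp_neg_sq_norm :
    Integrable fun v : V ↦ rexp (-‖v‖ ^ 2) := by
  simpa [Complex.norm_exp, ← Complex.ofReal_pow] using
    (GaussianFourier.integrable_cexp_neg_mul_sq_norm_add (V := V) (b := 1) one_pos 0 0).norm

lemma integral_exp_neg_sq_norm :
    ∫ v : V, rexp (-‖v‖ ^ 2) = π ^ ((Module.finrank ℝ V : ℝ) / 2) := by
  simpa using GaussianFourier.integral_rexp_neg_mul_sq_norm (V := V) one_pos

lemma integrable_exp_neg_sq_norm_sub_mul_exp_neg_sq_norm_sub (a b : V) :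
    Integrable fun y : V ↦ rexp (-‖y - a‖ ^ 2 / 2) * rexp (-‖y - b‖ ^ 2 / 2) := by
  simp_rw [exp_neg_sq_norm_sub_mul_exp_neg_sq_norm_sub a b]
  exact (integrable_exp_neg_sq_norm.comp_sub_right _).const_mul _

lemma integral_exp_neg_sq_norm_sub_mul_exp_neg_sq_norm_sub (a b : V) :
    ∫ y : V, rexp (-‖y - a‖ ^ 2 / 2) * rexp (-‖y - b‖ ^ 2 / 2) =
      π ^ ((Module.finrank ℝ V : ℝ) / 2) * rexp (-‖a - b‖ ^ 2 / 4) := by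
  simp_rw [exp_neg_sq_norm_sub_mul_exp_neg_sq_norm_sub a b]
  rw [integral_const_mul, integral_sub_right_eq_self (fun y : V ↦ rexp (-‖y‖ ^ 2)),
    integral_exp_neg_sq_norm, mul_comm]

lemma integrable_prod_exp_neg_sq_norm_sub_mul_exp_neg_sq_norm_sub {X : Type*} [MeasurableSpace X] (ν : Measure X)
    [IsFiniteMeasure ν] {a : X → V} (ha : Measurable a) :
    Integrable (Function.uncurry fun (y : V) (p : X × X) ↦
      rexp (-‖y - a p.1‖ ^ 2 / 2) * rexp (-‖y - a p.2‖ ^ 2 / 2)) (volume.prod (ν.prod ν)) := by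
  have hmeas : Measurable (Function.uncurry fun (y : V) (p : X × X) ↦
      rexp (-‖y - a p.1‖ ^ 2 / 2) * rexp (-‖y - a p.2‖ ^ 2 / 2)) := by
    fun_prop
  rw [integrable_prod_iff' hmeas.aestronglyMeasurable]
  refine ⟨ae_of_all _ fun p ↦ ?_, ?_⟩
  · exact integrable_exp_neg_sq_norm_sub_mul_exp_neg_sq_norm_sub (a p.1) (a p.2)
  · simp only [Function.uncurry_apply_pair,
      Real.norm_of_nonneg (mul_nonneg (exp_nonneg _) (exp_nonneg _)),
      integral_exp_neg_sq_norm_sub_mul_exp_neg_sq_norm_sub]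
    refine ((integrable_const 1).mono' (by fun_prop) (ae_of_all _ fun p ↦ ?_)).const_mul _
    rw [Real.norm_of_nonneg (exp_nonneg _), exp_le_one_iff]
    linarith [sq_nonneg ‖a p.1 - a p.2‖]

theorem integral_sq_integral_exp_neg_sq_norm_sub {X : Type*} [MeasurableSpace X] (ν : Measure X)
    [IsFiniteMeasure ν] {a : X → V} (ha : Measurable a) :
    ∫ y : V, (∫ x, rexp (-‖y - a x‖ ^ 2 / 2) ∂ν) ^ 2 =
      π ^ ((Module.finrank ℝ V : ℝ) / 2) *
        ∫ p : X × X, rexp (-‖a p.1 - a p.2‖ ^ 2 / 4) ∂(ν.prod ν) := by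
  simp_rw [sq (∫ _, _ ∂ν), ← integral_prod_mul]
  rw [integral_integral_swap (integrable_prod_exp_neg_sq_norm_sub_mul_exp_neg_sq_norm_sub ν ha)]
  simp_rw [integral_exp_neg_sq_norm_sub_mul_exp_neg_sq_norm_sub]
  exact integral_const_mul _ _

end

theorem stmt8_general (nt nr : ℕ)
    (H : Matrix (Fin nr) (Fin nt) ℝ)
    (μ : Measure (EuclideanSpace ℝ (Fin nt))) (hμ : IsProbabilityMeasure μ) :
    ∫ y : EuclideanSpace ℝ (Fin nr),
        ((2 * π) ^ (-(nr : ℝ) / 2) *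
          ∫ x, Real.exp (-‖y - (Matrix.toEuclideanLin H) x‖ ^ 2 / 2) ∂μ) ^ 2 =
      2 ^ (-(nr : ℝ)) * π ^ (-(nr : ℝ) / 2) *
        ∫ xx' : EuclideanSpace ℝ (Fin nt) × EuclideanSpace ℝ (Fin nt),
          Real.exp (-‖(Matrix.toEuclideanLin H) (xx'.1 - xx'.2)‖ ^ 2 / 4) ∂(μ.prod μ) := by
  set T := Matrix.toEuclideanLin H
  have hT : Measurable T := T.continuous_of_finiteDimensional.measurable
  simp_rw [mul_pow, integral_const_mul, integral_sq_integral_exp_neg_sq_norm_sub μ hT, map_sub,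
    finrank_euclideanSpace_fin, ← mul_assoc]
  congr 1
  rw [← rpow_natCast, ← rpow_mul (by positivity), mul_rpow zero_le_two pi_pos.le, mul_assoc,
    ← rpow_add pi_pos]
  congr 2 <;> push_cast <;> ring

/-- **Second moment of the output density.**
For the output density `f_μ(y) = (2π)^{-n_r/2} ∫ exp(-‖y-Hx‖²/2) dμ(x)` of the Gaussian channel,
`∫ f_μ² = 2^{-n_r} π^{-n_r/2} ∬ exp(-‖H(x-x')‖²/4) dμ(x) dμ(x')`. -/
theorem stmt8 (nt nr : ℕ) (hnt : 0 < nt) (hnr : 0 < nr)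
    (H : Matrix (Fin nr) (Fin nt) ℝ)
    (μ : Measure (EuclideanSpace ℝ (Fin nt))) (hμ : IsProbabilityMeasure μ) :
    ∫ y : EuclideanSpace ℝ (Fin nr),
        ((2 * π) ^ (-(nr : ℝ) / 2) *
          ∫ x, Real.exp (-‖y - (Matrix.toEuclideanLin H) x‖ ^ 2 / 2) ∂μ) ^ 2 =
      2 ^ (-(nr : ℝ)) * π ^ (-(nr : ℝ) / 2) *
        ∫ xx' : EuclideanSpace ℝ (Fin nt) × EuclideanSpace ℝ (Fin nt),
          Real.exp (-‖(Matrix.toEuclideanLin H) (xx'.1 - xx'.2)‖ ^ 2 / 4) ∂(μ.prod μ) :=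
  stmt8_general nt nr H μ hμ
end
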